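/- arXiv:2401.10546 — 5 statements merged into one kernel-verified Lean document; each statement's English description precedes it below -/
import Mathlib

section
/- Let γ ∈ (0, 1). There exists θ₀ ∈ (π/2, π) such that for every θ ∈ (π/2, θ₀) there is a constant c > 0, independent of τ and z, with the property: for every time step τ > 0 and every z ∈ D(τ,θ) one has |δ_τ(e^{−zτ})^{3−γ} (ρ₂(e^{−zτ})/2) τ³ − z^{−γ}| ≤ c τ³ |z|^{3−γ}, where δ_τ is the BDF3 generating symbol and ρ₂(ξ) = ξ(1+ξ)/(1−ξ)³. -/
open Complex Set

/-- The BDF3 generating symbol `δ_τ(ξ) = τ⁻¹(11/6 − 3ξ + (3/2)ξ² − (1/3)ξ³)`. -/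
noncomputable def bdf3 (τ : ℝ) (ξ : ℂ) : ℂ :=
  (τ : ℂ)⁻¹ * (11 / 6 - 3 * ξ + (3 / 2) * ξ ^ 2 - (1 / 3) * ξ ^ 3)

/-- The region `D(τ,θ)`: nonzero `z` with either `|arg z| = θ` and `|Im z| ≤ π/τ`,
or `|z| ≤ 1/τ` and `|arg z| ≤ θ`. -/
def Dset (τ θ : ℝ) : Set ℂ :=
  {z : ℂ | z ≠ 0 ∧
    ((|z.arg| = θ ∧ |z.im| ≤ Real.pi / τ) ∨ (‖z‖ ≤ 1 / τ ∧ |z.arg| ≤ θ))}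

/-- Closed form of the generating function `Σ_{n≥1} n² ξⁿ`. -/
noncomputable def rho2 (ξ : ℂ) : ℂ := ξ * (1 + ξ) / (1 - ξ) ^ 3

/-!
Put `w = zτ`. Since `δ_τ = τ⁻¹ δ_1` and all powers are principal, the error equals `τ^γ` times the
error at `τ = 1` evaluated at `w` (this is `bdf3Defect γ w`), and `τ^γ |w|^(3-γ) = τ³ |z|^(3-γ)`.
So it suffices to bound `bdf3Defect γ w` by `c |w|^(3-γ)` on `D(1,θ)`, which for
`π/2 ≤ θ ≤ 7π/12` lies in the sector `|arg w| ≤ 7π/12` and in the disc `|w| ≤ 5`.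

Near `0`, BDF3 has order three: `δ_1(e^{-w}) = w A` with `A = 1 + O(w³)`, and also
`w³ ρ₂(e^{-w}) / 2 = B = 1 + O(w³)`. As `arg A = O(w³)` and `|arg w| ≤ 7π/12 < π`, the principal
power splits, `(w A)^(3-γ) = w^(3-γ) A^(3-γ)`, so the error is `w^(-γ) (A^(3-γ) B - 1)`, which is
`O(|w|^(3-γ))`. On the compact annulus `1/10 ≤ |w| ≤ 5` we have `e^{-w} ≠ 1` because `|w| < 2π`,
so the error divided by `|w|^(3-γ)` is dominated by a continuous function, hence bounded.
-/

open scoped Real Nat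

theorem norm_exp_sub_sum_range_le {x : ℂ} (hx : ‖x‖ ≤ 1) {n : ℕ} (hn : 2 ≤ n) :
    ‖exp x - ∑ m ∈ Finset.range n, x ^ m / (m ! : ℂ)‖ ≤ ‖x‖ ^ n := by
  refine (exp_bound hx (by omega)).trans (mul_le_of_le_one_right (by positivity) ?_)
  have : n + 1 ≤ n ! * n := by nlinarith [Nat.self_le_factorial n]
  rw [← div_eq_mul_inv, div_le_one (by positivity)]
  exact_mod_cast this

theorem norm_exp_neg_pow_sub_sum_range_le {w : ℂ} {k n : ℕ} (hk : k * ‖w‖ ≤ 1) (hn : 2 ≤ n) :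
    ‖exp (-w) ^ k - ∑ m ∈ Finset.range n, (-(k * w)) ^ m / (m ! : ℂ)‖ ≤ k ^ n * ‖w‖ ^ n := by
  have hx : ‖-(k * w)‖ = k * ‖w‖ := by simp
  rw [← exp_nat_mul, mul_neg, ← mul_pow, ← hx]
  exact norm_exp_sub_sum_range_le (hx ▸ hk) hn

theorem half_norm_le_norm_one_sub_exp_neg {w : ℂ} (hw : ‖w‖ ≤ 1 / 2) :
    ‖w‖ / 2 ≤ ‖1 - exp (-w)‖ := by
  have h := norm_exp_sub_sum_range_le (x := -w) (by rw [norm_neg]; linarith) le_rfl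
  norm_num [Finset.sum_range_succ] at h
  calc ‖w‖ / 2 ≤ ‖w‖ - ‖w‖ ^ 2 := by nlinarith [norm_nonneg w]
    _ ≤ ‖w‖ - ‖exp (-w) - (1 + -w)‖ := by linarith
    _ ≤ ‖1 - exp (-w)‖ := by
        rw [show 1 - exp (-w) = w - (exp (-w) - (1 + -w)) by ring]
        exact norm_sub_norm_le _ _

theorem exp_ne_one_of_norm_lt_two_pi {u : ℂ} (hu0 : u ≠ 0) (hu : ‖u‖ < 2 * π) : exp u ≠ 1 := by
  rw [Ne, exp_eq_one_iff]
  rintro ⟨n, rfl⟩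
  have hn : (1 : ℝ) ≤ |(n : ℝ)| := by
    have : n ≠ 0 := by rintro rfl; simp at hu0
    exact_mod_cast Int.one_le_abs this
  have : ‖(n : ℂ) * (2 * π * I)‖ = |(n : ℝ)| * (2 * π) := by
    simp [abs_of_pos Real.pi_pos]
  nlinarith [Real.pi_pos]

theorem norm_log_le_of_norm_sub_one_le {A : ℂ} (hA : ‖A - 1‖ ≤ 1 / 2) :
    ‖log A‖ ≤ 3 / 2 * ‖A - 1‖ := by
  simpa using norm_log_one_add_half_le_self hA

theorem abs_arg_le_of_norm_sub_one_le {A : ℂ} (hA : ‖A - 1‖ ≤ 1 / 2) :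
    |arg A| ≤ 3 / 2 * ‖A - 1‖ := by
  rw [← log_im]
  exact (abs_im_le_norm _).trans (norm_log_le_of_norm_sub_one_le hA)

theorem norm_cpow_sub_one_le {A s : ℂ} (hA : ‖A - 1‖ ≤ 1 / 2)
    (hs : 3 / 2 * ‖A - 1‖ * ‖s‖ ≤ 1) : ‖A ^ s - 1‖ ≤ 3 * ‖A - 1‖ * ‖s‖ := by
  have hA0 : A ≠ 0 := by rintro rfl; norm_num at hA
  have hlog : ‖log A * s‖ ≤ 3 / 2 * ‖A - 1‖ * ‖s‖ := by
    rw [norm_mul]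
    gcongr
    exact norm_log_le_of_norm_sub_one_le hA
  rw [cpow_def_of_ne_zero hA0]
  linarith [norm_exp_sub_one_le (hlog.trans hs)]

theorem mul_cpow_of_arg_add_mem {x y : ℂ} (hx : x ≠ 0) (hy : y ≠ 0)
    (h : arg x + arg y ∈ Ioc (-π) π) (s : ℂ) : (x * y) ^ s = x ^ s * y ^ s := by
  rw [cpow_def_of_ne_zero (mul_ne_zero hx hy), cpow_def_of_ne_zero hx, cpow_def_of_ne_zero hy,
    log_mul hx hy h, add_mul, exp_add]

theorem mul_cpow_of_abs_arg_add_lt {x A : ℂ} (hx : x ≠ 0) (hA : ‖A - 1‖ ≤ 1 / 2)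
    (h : |arg x| + 3 / 2 * ‖A - 1‖ < π) (s : ℂ) : (x * A) ^ s = x ^ s * A ^ s := by
  have hA0 : A ≠ 0 := by rintro rfl; norm_num at hA
  have hargA := abs_arg_le_of_norm_sub_one_le hA
  refine mul_cpow_of_arg_add_mem hx hA0 ?_ s
  rw [abs_le] at hargA
  constructor <;> linarith [le_abs_self (arg x), neg_abs_le (arg x)]

theorem ofReal_mul_cpow {r : ℝ} (hr : 0 < r) (x s : ℂ) :
    ((r : ℂ) * x) ^ s = (r : ℂ) ^ s * x ^ s := by
  rcases eq_or_ne x 0 with rfl | hx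
  · rcases eq_or_ne s 0 with rfl | hs <;> simp [*]
  refine mul_cpow_of_arg_add_mem (ofReal_ne_zero.2 hr.ne') hx ?_ s
  rw [arg_ofReal_of_nonneg hr.le, zero_add]
  exact ⟨neg_pi_lt_arg x, arg_le_pi x⟩

theorem norm_bdf3_one_exp_neg_sub_le {w : ℂ} (hw : ‖w‖ ≤ 1 / 3) :
    ‖bdf3 1 (exp (-w)) - w‖ ≤ 45 * ‖w‖ ^ 4 := by
  set a := exp (-w)
  set P : ℕ → ℂ := fun k => ∑ m ∈ Finset.range 5, (-(k * w)) ^ m / (m ! : ℂ)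
  have hP (k : ℕ) (hk : k ≤ 3) : ‖a ^ k - P k‖ ≤ k ^ 5 * ‖w‖ ^ 5 := by
    refine norm_exp_neg_pow_sub_sum_range_le ?_ (by norm_num)
    have : (k : ℝ) ≤ 3 := by exact_mod_cast hk
    nlinarith [norm_nonneg w]
  -- the Taylor polynomials of `e^{-kw}` reproduce `bdf3 1` up to the `w⁴` term
  have key : bdf3 1 a - w =
      -3 * (a ^ 1 - P 1) + 3 / 2 * (a ^ 2 - P 2) + (-1 / 3) * (a ^ 3 - P 3) + -(w ^ 4 / 4) := by
    simp only [P, bdf3, Finset.sum_range_succ, Finset.sum_range_zero, Nat.factorial]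
    push_cast
    ring
  have h5 : ‖w‖ ^ 5 ≤ ‖w‖ ^ 4 / 3 := by nlinarith [pow_nonneg (norm_nonneg w) 4]
  calc ‖bdf3 1 a - w‖
      ≤ 3 * ‖a ^ 1 - P 1‖ + 3 / 2 * ‖a ^ 2 - P 2‖ + 1 / 3 * ‖a ^ 3 - P 3‖ + ‖w‖ ^ 4 / 4 := by
        rw [key]
        refine norm_add₄_le.trans_eq ?_
        simp
    _ ≤ 3 * ‖w‖ ^ 5 + 3 / 2 * (32 * ‖w‖ ^ 5) + 1 / 3 * (243 * ‖w‖ ^ 5) + ‖w‖ ^ 4 / 4 := by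
        have := hP 1; have := hP 2; have := hP 3
        norm_num at *
        gcongr
    _ ≤ 45 * ‖w‖ ^ 4 := by linarith [pow_nonneg (norm_nonneg w) 4]

theorem norm_rho2_numerator_le {w : ℂ} (hw : ‖w‖ ≤ 1 / 3) :
    ‖w ^ 3 * (exp (-w) + exp (-w) ^ 2) - 2 * (1 - exp (-w)) ^ 3‖ ≤ 2000 * ‖w‖ ^ 6 := by
  set a := exp (-w)
  set P : ℕ → ℕ → ℂ := fun n k => ∑ m ∈ Finset.range n, (-(k * w)) ^ m / (m ! : ℂ)
  have hP (n k : ℕ) (hn : 2 ≤ n) (hk : k ≤ 3) : ‖a ^ k - P n k‖ ≤ k ^ n * ‖w‖ ^ n := by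
    refine norm_exp_neg_pow_sub_sum_range_le ?_ hn
    have : (k : ℝ) ≤ 3 := by exact_mod_cast hk
    nlinarith [norm_nonneg w]
  have key : w ^ 3 * (a + a ^ 2) - 2 * (1 - a) ^ 3 =
      w ^ 3 * (a ^ 1 - P 4 1) + w ^ 3 * (a ^ 2 - P 4 2) + 6 * (a ^ 1 - P 7 1)
        + -6 * (a ^ 2 - P 7 2) + 2 * (a ^ 3 - P 7 3) := by
    simp only [P, Finset.sum_range_succ, Finset.sum_range_zero, Nat.factorial]
    push_cast
    ring
  have h7 : ‖w‖ ^ 7 ≤ ‖w‖ ^ 6 / 3 := by nlinarith [pow_nonneg (norm_nonneg w) 6]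
  calc ‖w ^ 3 * (a + a ^ 2) - 2 * (1 - a) ^ 3‖
      ≤ ‖w‖ ^ 3 * ‖a ^ 1 - P 4 1‖ + ‖w‖ ^ 3 * ‖a ^ 2 - P 4 2‖ + 6 * ‖a ^ 1 - P 7 1‖
        + 6 * ‖a ^ 2 - P 7 2‖ + 2 * ‖a ^ 3 - P 7 3‖ := by
        rw [key]
        refine ((norm_add_le _ _).trans (add_le_add_left norm_add₄_le _)).trans_eq ?_
        simp
    _ ≤ ‖w‖ ^ 3 * ‖w‖ ^ 4 + ‖w‖ ^ 3 * (16 * ‖w‖ ^ 4) + 6 * ‖w‖ ^ 7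
        + 6 * (128 * ‖w‖ ^ 7) + 2 * (2187 * ‖w‖ ^ 7) := by
        have := hP 4 1; have := hP 4 2; have := hP 7 1; have := hP 7 2; have := hP 7 3
        norm_num at *
        gcongr
    _ ≤ 2000 * ‖w‖ ^ 6 := by linarith [pow_nonneg (norm_nonneg w) 6]

theorem norm_mul_rho2_exp_neg_sub_one_le {w : ℂ} (hw0 : w ≠ 0) (hw : ‖w‖ ≤ 1 / 3) :
    ‖w ^ 3 * (rho2 (exp (-w)) / 2) - 1‖ ≤ 8000 * ‖w‖ ^ 3 := by
  have hlb := half_norm_le_norm_one_sub_exp_neg (hw.trans (by norm_num))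
  have hd : 1 - exp (-w) ≠ 0 := norm_pos_iff.1 ((by positivity : 0 < ‖w‖ / 2).trans_le hlb)
  have key : w ^ 3 * (rho2 (exp (-w)) / 2) - 1 =
      (w ^ 3 * (exp (-w) + exp (-w) ^ 2) - 2 * (1 - exp (-w)) ^ 3) / (2 * (1 - exp (-w)) ^ 3) := by
    rw [rho2]
    field_simp
  rw [key, norm_div, norm_mul, norm_pow,
    div_le_iff₀ (mul_pos (by norm_num) (pow_pos (norm_pos_iff.2 hd) 3))]
  calc _ ≤ 2000 * ‖w‖ ^ 6 := norm_rho2_numerator_le hw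
    _ = 8000 * ‖w‖ ^ 3 * (2 * (‖w‖ / 2) ^ 3) := by ring
    _ ≤ 8000 * ‖w‖ ^ 3 * (‖(2 : ℂ)‖ * ‖1 - exp (-w)‖ ^ 3) := by
        rw [norm_ofNat]
        gcongr

theorem norm_bdf3_one_exp_neg_div_sub_one_le {w : ℂ} (hw0 : w ≠ 0) (hw : ‖w‖ ≤ 1 / 3) :
    ‖bdf3 1 (exp (-w)) / w - 1‖ ≤ 45 * ‖w‖ ^ 3 := by
  rw [div_sub_one hw0, norm_div, div_le_iff₀ (norm_pos_iff.2 hw0)]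
  linarith [norm_bdf3_one_exp_neg_sub_le hw]

noncomputable def bdf3Defect (γ : ℝ) (w : ℂ) : ℂ :=
  bdf3 1 (exp (-w)) ^ ((3 - γ : ℝ) : ℂ) * (rho2 (exp (-w)) / 2) - w ^ (-(γ : ℂ))

theorem bdf3Defect_eq {γ : ℝ} {w A : ℂ} (hw : w ≠ 0) (hA : ‖A - 1‖ ≤ 1 / 2)
    (harg : |arg w| + 3 / 2 * ‖A - 1‖ < π) (h : bdf3 1 (exp (-w)) = w * A) :
    bdf3Defect γ w =
      w ^ (-(γ : ℂ)) * (A ^ ((3 - γ : ℝ) : ℂ) * (w ^ 3 * (rho2 (exp (-w)) / 2)) - 1) := by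
  rw [bdf3Defect, h, mul_cpow_of_abs_arg_add_lt hw hA harg,
    show ((3 - γ : ℝ) : ℂ) = 3 + -(γ : ℂ) by push_cast; ring, cpow_add _ _ hw, cpow_ofNat]
  ring

theorem norm_bdf3Defect_le_of_norm_le {γ : ℝ} (hγ : γ ∈ Icc 0 6) {w : ℂ} (hw0 : w ≠ 0)
    (hw : ‖w‖ ≤ 1 / 10) (harg : |arg w| ≤ 7 * π / 12) :
    ‖bdf3Defect γ w‖ ≤ 20000 * ‖w‖ ^ (3 - γ) := by
  have hw3 : ‖w‖ ^ 3 ≤ 1 / 1000 := by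
    calc ‖w‖ ^ 3 ≤ (1 / 10) ^ 3 := by gcongr
      _ = 1 / 1000 := by norm_num
  set A := bdf3 1 (exp (-w)) / w
  set B := w ^ 3 * (rho2 (exp (-w)) / 2)
  set s : ℂ := ((3 - γ : ℝ) : ℂ)
  have hA : ‖A - 1‖ ≤ 45 * ‖w‖ ^ 3 :=
    norm_bdf3_one_exp_neg_div_sub_one_le hw0 (hw.trans (by norm_num))
  have hB : ‖B - 1‖ ≤ 8000 * ‖w‖ ^ 3 :=
    norm_mul_rho2_exp_neg_sub_one_le hw0 (hw.trans (by norm_num))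
  have hs : ‖s‖ ≤ 3 := by
    simp only [s, norm_real, Real.norm_eq_abs, abs_le]
    constructor <;> linarith [hγ.1, hγ.2]
  have hAs : ‖A ^ s - 1‖ ≤ 405 * ‖w‖ ^ 3 := by
    calc ‖A ^ s - 1‖ ≤ 3 * ‖A - 1‖ * ‖s‖ :=
          norm_cpow_sub_one_le (by linarith) (by nlinarith [norm_nonneg s, norm_nonneg (A - 1)])
      _ ≤ 3 * (45 * ‖w‖ ^ 3) * 3 := by gcongr
      _ = 405 * ‖w‖ ^ 3 := by ring
  have hAB : ‖A ^ s * B - 1‖ ≤ 20000 * ‖w‖ ^ 3 := by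
    have hB9 : ‖B‖ ≤ 9 := by linarith [norm_sub_norm_le B 1, norm_one (α := ℂ)]
    calc ‖A ^ s * B - 1‖ = ‖(A ^ s - 1) * B + (B - 1)‖ := by ring_nf
      _ ≤ ‖A ^ s - 1‖ * ‖B‖ + ‖B - 1‖ := (norm_add_le _ _).trans_eq (by rw [norm_mul])
      _ ≤ 405 * ‖w‖ ^ 3 * 9 + 8000 * ‖w‖ ^ 3 := by gcongr
      _ ≤ 20000 * ‖w‖ ^ 3 := by linarith [pow_nonneg (norm_nonneg w) 3]
  rw [bdf3Defect_eq hw0 (by linarith) (by linarith [Real.pi_gt_three])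
      (mul_div_cancel₀ _ hw0).symm, norm_mul,
    show ‖w ^ (-(γ : ℂ))‖ = ‖w‖ ^ (-γ) by simpa using norm_cpow_real w (-γ)]
  calc ‖w‖ ^ (-γ) * ‖A ^ s * B - 1‖ ≤ ‖w‖ ^ (-γ) * (20000 * ‖w‖ ^ 3) := by gcongr
    _ = 20000 * ‖w‖ ^ (3 - γ) := by
      rw [sub_eq_add_neg, Real.rpow_add (norm_pos_iff.2 hw0), Real.rpow_ofNat]
      ring

theorem exists_norm_bdf3Defect_le_of_norm_mem_Icc {γ : ℝ} (hγ : γ ≤ 3) :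
    ∃ C, ∀ u : ℂ, ‖u‖ ∈ Icc (1 / 10) 5 → ‖bdf3Defect γ u‖ ≤ C * ‖u‖ ^ (3 - γ) := by
  set K : Set ℂ := norm ⁻¹' Icc (1 / 10) 5
  have hK : IsCompact K := (isCompact_closedBall (0 : ℂ) 5).of_isClosed_subset
    (isClosed_Icc.preimage continuous_norm) (fun u hu => by simpa using hu.2)
  have hK0 {u : ℂ} (hu : u ∈ K) : 0 < ‖u‖ := by linarith [hu.1]
  have hρ : ContinuousOn (fun u : ℂ => rho2 (exp (-u))) K := by
    refine ContinuousOn.div (by fun_prop) (by fun_prop) fun u hu => pow_ne_zero 3 ?_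
    refine sub_ne_zero.2 (exp_ne_one_of_norm_lt_two_pi ?_ ?_).symm
    · simpa using hK0 hu
    · linarith [hu.2, norm_neg u, Real.pi_gt_three]
  have hf : ContinuousOn (fun u : ℂ => (‖bdf3 1 (exp (-u))‖ ^ (3 - γ) *
      ‖rho2 (exp (-u)) / 2‖ + ‖u‖ ^ (-γ)) / ‖u‖ ^ (3 - γ)) K := by
    refine ContinuousOn.div ?_ ?_ fun u hu => (Real.rpow_pos_of_pos (hK0 hu) _).ne'
    · refine ContinuousOn.add (ContinuousOn.mul ?_ (hρ.div_const 2).norm) ?_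
      · exact ((by unfold bdf3; fun_prop) : Continuous fun u : ℂ => ‖bdf3 1 (exp (-u))‖)
          |>.continuousOn.rpow_const fun _ _ => Or.inr (by linarith)
      · exact continuous_norm.continuousOn.rpow_const fun u hu => Or.inl (hK0 hu).ne'
    · exact continuous_norm.continuousOn.rpow_const fun _ _ => Or.inr (by linarith)
  obtain ⟨C, hC⟩ := hK.exists_bound_of_continuousOn hf
  refine ⟨C, fun u hu => ?_⟩
  have hpos : 0 < ‖u‖ ^ (3 - γ) := Real.rpow_pos_of_pos (hK0 hu) _
  calc ‖bdf3Defect γ u‖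
      ≤ ‖bdf3 1 (exp (-u))‖ ^ (3 - γ) * ‖rho2 (exp (-u)) / 2‖ + ‖u‖ ^ (-γ) := by
        refine (norm_sub_le _ _).trans_eq ?_
        rw [norm_mul, norm_cpow_real]
        simpa using norm_cpow_real u (-γ)
    _ = (‖bdf3 1 (exp (-u))‖ ^ (3 - γ) * ‖rho2 (exp (-u)) / 2‖ + ‖u‖ ^ (-γ))
          / ‖u‖ ^ (3 - γ) * ‖u‖ ^ (3 - γ) := (div_mul_cancel₀ _ hpos.ne').symm
    _ ≤ C * ‖u‖ ^ (3 - γ) := by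
        gcongr
        exact (le_abs_self _).trans (hC u hu)

theorem abs_arg_le_and_norm_le_of_mem_Dset_one {θ : ℝ} (hθ : θ ∈ Icc (π / 2) (7 * π / 12))
    {w : ℂ} (hw : w ∈ Dset 1 θ) : |arg w| ≤ θ ∧ ‖w‖ ≤ 5 := by
  obtain ⟨-, ⟨harg, him⟩ | ⟨hnorm, harg⟩⟩ := hw
  · refine ⟨harg.le, ?_⟩
    have hsin : 5 / 6 ≤ Real.sin θ := by
      rw [← Real.cos_sub_pi_div_two]
      nlinarith [Real.one_sub_sq_div_two_le_cos (x := θ - π / 2), hθ.1, hθ.2, Real.pi_lt_four]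
    have : ‖w‖ * Real.sin θ = |w.im| := by
      rw [← harg, ← Real.abs_sin_eq_sin_abs_of_abs_le_pi (abs_arg_le_pi w), ← abs_norm, ← abs_mul,
        norm_mul_sin_arg]
    have : |w.im| ≤ π := by simpa using him
    nlinarith [norm_nonneg w, Real.pi_lt_four]
  · exact ⟨harg, by linarith [show ‖w‖ ≤ 1 by simpa using hnorm]⟩

theorem exists_norm_bdf3Defect_le {γ : ℝ} (hγ : γ ∈ Icc 0 3) {θ : ℝ}
    (hθ : θ ∈ Icc (π / 2) (7 * π / 12)) :
    ∃ c > 0, ∀ w ∈ Dset 1 θ, ‖bdf3Defect γ w‖ ≤ c * ‖w‖ ^ (3 - γ) := by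
  obtain ⟨C, hC⟩ := exists_norm_bdf3Defect_le_of_norm_mem_Icc hγ.2
  refine ⟨max 20000 C, lt_max_of_lt_left (by norm_num), fun w hw => ?_⟩
  obtain ⟨harg, hw5⟩ := abs_arg_le_and_norm_le_of_mem_Dset_one hθ hw
  rcases le_or_gt ‖w‖ (1 / 10) with hnear | hfar
  · calc _ ≤ 20000 * ‖w‖ ^ (3 - γ) :=
          norm_bdf3Defect_le_of_norm_le ⟨hγ.1, by linarith [hγ.2]⟩ hw.1 hnear (harg.trans hθ.2)
      _ ≤ _ := by gcongr; exact le_max_left _ _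
  · calc _ ≤ C * ‖w‖ ^ (3 - γ) := hC w ⟨hfar.le, hw5⟩
      _ ≤ _ := by gcongr; exact le_max_right _ _

theorem mul_ofReal_mem_Dset_one {τ θ : ℝ} (hτ : 0 < τ) {z : ℂ} (hz : z ∈ Dset τ θ) :
    z * τ ∈ Dset 1 θ := by
  obtain ⟨hz0, ⟨harg, him⟩ | ⟨hnorm, harg⟩⟩ := hz
  all_goals refine ⟨mul_ne_zero hz0 (ofReal_ne_zero.2 hτ.ne'), ?_⟩
  all_goals rw [mul_comm, arg_real_mul z hτ]
  · refine Or.inl ⟨harg, ?_⟩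
    rw [im_ofReal_mul, abs_mul, abs_of_pos hτ, div_one]
    calc τ * |z.im| ≤ τ * (π / τ) := by gcongr
      _ = π := mul_div_cancel₀ _ hτ.ne'
  · refine Or.inr ⟨?_, harg⟩
    rw [norm_mul, norm_real, Real.norm_of_nonneg hτ.le]
    calc τ * ‖z‖ ≤ τ * (1 / τ) := by gcongr
      _ = 1 / 1 := by field_simp

theorem bdf3_rho2_sub_cpow_eq_mul_bdf3Defect {γ τ : ℝ} (hτ : 0 < τ) (z : ℂ) :
    bdf3 τ (exp (-z * τ)) ^ ((3 - γ : ℝ) : ℂ) * (rho2 (exp (-z * τ)) / 2) * (τ : ℂ) ^ 3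
      - z ^ (-(γ : ℂ)) = ((τ ^ γ : ℝ) : ℂ) * bdf3Defect γ (z * τ) := by
  set t : ℂ := ((τ⁻¹ : ℝ) : ℂ)
  have ht : t ^ 3 * (τ : ℂ) ^ 3 = 1 := by
    rw [← mul_pow]; simp [t, inv_mul_cancel₀ (ofReal_ne_zero.2 hτ.ne')]
  have htγ : t ^ (-(γ : ℂ)) = ((τ ^ γ : ℝ) : ℂ) := by
    rw [show -(γ : ℂ) = ((-γ : ℝ) : ℂ) by push_cast; rfl, ← ofReal_cpow (by positivity),
      Real.inv_rpow hτ.le, Real.rpow_neg hτ.le, inv_inv]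
  have hbdf (ξ : ℂ) : bdf3 τ ξ = t * bdf3 1 ξ := by simp [t, bdf3]
  have hz : z ^ (-(γ : ℂ)) = t ^ (-(γ : ℂ)) * (z * τ) ^ (-(γ : ℂ)) := by
    rw [← ofReal_mul_cpow (inv_pos.2 hτ)]
    congr 1
    simp only [ofReal_inv]
    field_simp [ofReal_ne_zero.2 hτ.ne']
  rw [bdf3Defect, neg_mul, hbdf, ofReal_mul_cpow (inv_pos.2 hτ), hz, ← htγ,
    show ((3 - γ : ℝ) : ℂ) = 3 + -(γ : ℂ) by push_cast; ring,
    cpow_add _ _ (ofReal_ne_zero.2 (inv_pos.2 hτ).ne'), cpow_ofNat]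
  linear_combination (t ^ (-(γ : ℂ)) * bdf3 1 (exp (-(z * τ))) ^ (3 + -(γ : ℂ))
    * (rho2 (exp (-(z * τ))) / 2)) * ht

theorem bdf3_rho2_fractional_consistency (γ : ℝ) (hγ : γ ∈ Ioo (0 : ℝ) 1) :
    ∃ θ₀ ∈ Ioo (Real.pi / 2) Real.pi, ∀ θ ∈ Ioo (Real.pi / 2) θ₀,
      ∃ c > (0 : ℝ),
        ∀ τ : ℝ, 0 < τ → ∀ z ∈ Dset τ θ,
          ‖(bdf3 τ (Complex.exp (-z * τ))) ^ (((3 - γ : ℝ)) : ℂ) *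
              (rho2 (Complex.exp (-z * τ)) / 2) * (τ : ℂ) ^ 3 - z ^ (-(γ : ℂ))‖ ≤
            c * τ ^ 3 * ‖z‖ ^ (3 - γ) := by
  refine ⟨7 * π / 12, ⟨by linarith [Real.pi_pos], by linarith [Real.pi_pos]⟩, fun θ hθ => ?_⟩
  obtain ⟨c, hc, hbound⟩ :=
    exists_norm_bdf3Defect_le ⟨hγ.1.le, by linarith [hγ.2]⟩ (Ioo_subset_Icc_self hθ)
  refine ⟨c, hc, fun τ hτ z hz => ?_⟩
  have hτγ : τ ^ γ * τ ^ (3 - γ) = τ ^ 3 := by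
    rw [← Real.rpow_add hτ, add_sub_cancel, Real.rpow_ofNat]
  calc _ = τ ^ γ * ‖bdf3Defect γ (z * τ)‖ := by
        rw [bdf3_rho2_sub_cpow_eq_mul_bdf3Defect hτ, norm_mul, norm_real,
          Real.norm_of_nonneg (by positivity)]
    _ ≤ τ ^ γ * (c * ‖z * τ‖ ^ (3 - γ)) := by
        gcongr
        exact hbound _ (mul_ofReal_mem_Dset_one hτ hz)
    _ = c * τ ^ 3 * ‖z‖ ^ (3 - γ) := by
        rw [norm_mul, norm_real, Real.norm_of_nonneg hτ.le, Real.mul_rpow (norm_nonneg z) hτ.le]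
        linear_combination c * ‖z‖ ^ (3 - γ) * hτγ
end

section
/- Let θ ∈ (π/2, π), α ∈ (1, 2), γ ∈ (0, 1) and β ∈ (0, 1). There exists a constant c > 0, depending only on θ, α, γ, β, such that for all κ > 0 and all t > 0 with κ t ≤ 1 one has ∫₀ᵗ s^{β−1} ( ∫_κ^∞ e^{r s cos θ} r^{β−2α−2γ} dr + κ^{1+β−2α−2γ} ∫_{−θ}^{θ} e^{κ s cos φ} dφ ) ds ≤ c κ^{1−2α−2γ}. -/
/-!
For `0 < s ≤ t` both inner integrals are bounded independently of `s`: since `cos θ ≤ 0` the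
exponential in the radial integral is at most `1`, leaving `∫_κ^∞ r^p dr` with `p < -1`, and since
`κ s ≤ 1` the exponential on the arc is at most `e`. The bracket is therefore `O(κ^{1+β-2α-2γ})`,
and `∫₀ᵗ s^{β-1} ds = t^β / β ≤ κ^{-β} / β` because `κ t ≤ 1`.
-/

open Set MeasureTheory

lemma setIntegral_Ioi_exp_mul_rpow_le {κ s c p : ℝ} (hκ : 0 < κ) (hs : 0 ≤ s) (hc : c ≤ 0)
    (hp : p < -1) :
    ∫ r in Ioi κ, Real.exp (r * s * c) * r ^ p ≤ κ ^ (p + 1) / -(p + 1) := by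
  rw [div_neg, ← neg_div, ← integral_Ioi_rpow_of_lt hp hκ]
  refine integral_mono_of_nonneg ?_ (integrableOn_Ioi_rpow_of_lt hp hκ) ?_ <;>
    filter_upwards [ae_restrict_mem measurableSet_Ioi] with r hr
  · have := hκ.trans hr
    positivity
  · have hr0 := hκ.trans hr
    have hexp : Real.exp (r * s * c) ≤ 1 :=
      Real.exp_le_one_iff.mpr (mul_nonpos_of_nonneg_of_nonpos (by positivity) hc)
    simpa using mul_le_mul_of_nonneg_right hexp (Real.rpow_nonneg hr0.le p)

lemma setIntegral_Ioi_exp_mul_rpow_nonneg {κ s c p : ℝ} (hκ : 0 < κ) :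
    0 ≤ ∫ r in Ioi κ, Real.exp (r * s * c) * r ^ p :=
  setIntegral_nonneg measurableSet_Ioi fun r hr => by
    have := hκ.trans hr
    positivity

lemma intervalIntegral_exp_mul_cos_le {θ a : ℝ} (hθ : 0 ≤ θ) (ha₀ : 0 ≤ a) (ha₁ : a ≤ 1) :
    ∫ φ in (-θ)..θ, Real.exp (a * Real.cos φ) ≤ 2 * θ * Real.exp 1 := by
  have hmono : ∫ φ in (-θ)..θ, Real.exp (a * Real.cos φ) ≤ ∫ _ in (-θ)..θ, Real.exp 1 := by
    refine intervalIntegral.integral_mono_on (by linarith) ?_ intervalIntegrable_const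
      fun φ _ => Real.exp_le_exp.mpr ?_
    · exact (by fun_prop : Continuous fun φ => Real.exp (a * Real.cos φ)).intervalIntegrable _ _
    · nlinarith [Real.cos_le_one φ]
  rwa [intervalIntegral.integral_const, smul_eq_mul, show θ - -θ = 2 * θ by ring] at hmono

lemma intervalIntegral_exp_mul_cos_nonneg {θ a : ℝ} (hθ : 0 ≤ θ) :
    0 ≤ ∫ φ in (-θ)..θ, Real.exp (a * Real.cos φ) :=
  intervalIntegral.integral_nonneg (by linarith) fun _ _ => (Real.exp_pos _).le

lemma setIntegral_Ioc_rpow_sub_one_mul_le {β t M : ℝ} {g : ℝ → ℝ} (hβ : 0 < β) (ht : 0 ≤ t)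
    (hg : ∀ s ∈ Ioc 0 t, g s ∈ Icc 0 M) :
    ∫ s in Ioc 0 t, s ^ (β - 1) * g s ≤ M * (t ^ β / β) := by
  have hint : IntegrableOn (fun s : ℝ => s ^ (β - 1) * M) (Ioc 0 t) :=
    (intervalIntegrable_iff_integrableOn_Ioc_of_le ht).mp
      ((intervalIntegral.intervalIntegrable_rpow' (by linarith)).mul_const M)
  calc ∫ s in Ioc 0 t, s ^ (β - 1) * g s
      ≤ ∫ s in Ioc 0 t, s ^ (β - 1) * M := by
        refine integral_mono_of_nonneg ?_ hint ?_ <;>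
          filter_upwards [ae_restrict_mem measurableSet_Ioc] with s hs
        · have := (hg s hs).1
          have := Real.rpow_nonneg hs.1.le (β - 1)
          positivity
        · exact mul_le_mul_of_nonneg_left (hg s hs).2 (Real.rpow_nonneg hs.1.le _)
    _ = M * (t ^ β / β) := by
        rw [← intervalIntegral.integral_of_le ht, intervalIntegral.integral_mul_const,
          integral_rpow (Or.inl (by linarith)), sub_add_cancel, Real.zero_rpow hβ.ne', sub_zero,
          mul_comm]

lemma rpow_add_mul_rpow_le_of_mul_le_one {κ t q β : ℝ} (hκ : 0 < κ) (ht : 0 ≤ t)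
    (hκt : κ * t ≤ 1) (hβ : 0 ≤ β) :
    κ ^ (q + β) * t ^ β ≤ κ ^ q := by
  have hpow : (κ * t) ^ β ≤ 1 := Real.rpow_le_one (by positivity) hκt hβ
  rw [Real.rpow_add hκ, mul_assoc, ← Real.mul_rpow hκ.le ht]
  exact mul_le_of_le_one_right (Real.rpow_nonneg hκ.le q) hpow

lemma radial_add_arc_integral_mem_Icc {θ κ s p : ℝ} (hθ₀ : 0 ≤ θ) (hcos : Real.cos θ ≤ 0)
    (hκ : 0 < κ) (hs : 0 ≤ s) (hκs : κ * s ≤ 1) (hp : p < -1) :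
    (∫ r in Ioi κ, Real.exp (r * s * Real.cos θ) * r ^ p) +
        κ ^ (p + 1) * ∫ φ in (-θ)..θ, Real.exp (κ * s * Real.cos φ) ∈
      Icc 0 (κ ^ (p + 1) * (1 / -(p + 1) + 2 * θ * Real.exp 1)) := by
  have hrad := setIntegral_Ioi_exp_mul_rpow_le hκ hs hcos hp
  have harc := intervalIntegral_exp_mul_cos_le hθ₀ (by positivity) hκs
  have hrad₀ := setIntegral_Ioi_exp_mul_rpow_nonneg (s := s) (c := Real.cos θ) (p := p) hκ
  have harc₀ := intervalIntegral_exp_mul_cos_nonneg (a := κ * s) hθ₀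
  have hκp : 0 < κ ^ (p + 1) := Real.rpow_pos_of_pos hκ _
  rw [div_eq_mul_one_div] at hrad
  constructor
  · positivity
  · nlinarith

theorem contour_kernel_square_integral_estimate
    (θ α γ β : ℝ) (hθ : θ ∈ Ioo (Real.pi / 2) Real.pi)
    (hα : α ∈ Ioo (1 : ℝ) 2) (hγ : γ ∈ Ioo (0 : ℝ) 1) (hβ : β ∈ Ioo (0 : ℝ) 1) :
    ∃ c > (0 : ℝ), ∀ κ t : ℝ, 0 < κ → 0 < t → κ * t ≤ 1 →
      (∫ s in Ioc (0 : ℝ) t, s ^ (β - 1) *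
        ((∫ r in Ioi κ, Real.exp (r * s * Real.cos θ) * r ^ (β - 2 * α - 2 * γ)) +
          κ ^ (1 + β - 2 * α - 2 * γ) *
            ∫ φ in (-θ)..θ, Real.exp (κ * s * Real.cos φ))) ≤
      c * κ ^ (1 - 2 * α - 2 * γ) := by
  have hθ₀ : 0 ≤ θ := by linarith [Real.pi_pos, hθ.1]
  have hcos : Real.cos θ ≤ 0 := Real.cos_nonpos_of_pi_div_two_le_of_le hθ.1.le (by linarith [hθ.2])
  have hp : β - 2 * α - 2 * γ < -1 := by linarith [hα.1, hγ.1, hβ.2]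
  set C := 1 / -(1 + β - 2 * α - 2 * γ) + 2 * θ * Real.exp 1
  have hC : 0 < C := by
    have : 0 < -(1 + β - 2 * α - 2 * γ) := by linarith
    positivity
  refine ⟨C / β, div_pos hC hβ.1, fun κ t hκ ht hκt => ?_⟩
  have hbracket := fun s (hs : s ∈ Ioc 0 t) =>
    radial_add_arc_integral_mem_Icc hθ₀ hcos hκ hs.1.le (le_trans (by nlinarith [hs.2]) hκt) hp
  rw [show β - 2 * α - 2 * γ + 1 = 1 + β - 2 * α - 2 * γ by ring] at hbracket
  calc _ ≤ κ ^ (1 + β - 2 * α - 2 * γ) * C * (t ^ β / β) :=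
        setIntegral_Ioc_rpow_sub_one_mul_le hβ.1 ht.le hbracket
    _ = C / β * (κ ^ (1 - 2 * α - 2 * γ + β) * t ^ β) := by ring_nf
    _ ≤ C / β * κ ^ (1 - 2 * α - 2 * γ) := by
        exact mul_le_mul_of_nonneg_left (rpow_add_mul_rpow_le_of_mul_le_one hκ ht.le hκt hβ.1.le)
          (div_pos hC hβ.1).le
end

section
/- Let H be a complex Hilbert space, θ ∈ (π/2, π), α ∈ (1, 2), γ ∈ (0, 1), κ > 0 and M > 0. Let G be a continuous function from ℂ ∖ {0} to the bounded linear operators on H such that ‖G(z)‖ ≤ M |z|^{−α−γ} for every z ≠ 0 with |arg z| ≤ θ. For s > 0 define the operator E(s) = (1/(2π)) ( ∫_κ^∞ e^{s r e^{iθ}} G(r e^{iθ}) e^{iθ} dr − ∫_κ^∞ e^{s r e^{−iθ}} G(r e^{−iθ}) e^{−iθ} dr + i ∫_{−θ}^{θ} e^{s κ e^{iφ}} G(κ e^{iφ}) κ e^{iφ} dφ ), the contour integral (1/(2πi)) ∫_{Γ_{θ,κ}} e^{zs} G(z) dz; these Bochner integrals converge absolutely since cos θ < 0. Then there exists a constant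 c > 0, depending only on θ, α, γ, such that for every t > 0 with κ t ≤ 1 one has ∫₀ᵗ ‖E(s)‖² ds ≤ c M² κ^{1−2α−2γ}. -/
/-!
On the sector `|arg z| ≤ θ` we have `‖G z‖ ≤ M |z|^p` with `p = -α - γ < -1`. On the rays
`z = r e^{±iθ}` the factor `e^{zs}` has modulus `e^{s r cos θ} ≤ 1` since `cos θ < 0`, so each ray
contributes at most `M κ^{p+1} / (-p-1)`; on the arc, `s κ ≤ 1` bounds `e^{zs}` by `e`, and the arc
contributes at most `2θ e κ · M κ^p`. Hence `‖E s‖ ≤ K M κ^{p+1}` for all `0 < s ≤ t ≤ 1/κ`, with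
`K` depending only on `θ` and `p`, and integrating the square over `(0, t]` gives
`t K² M² κ^{2p+2} ≤ K² M² κ^{2p+1}`.
-/

open Set MeasureTheory Complex

namespace SectorContour

lemma norm_ofReal_mul_exp_mul_I {r : ℝ} (hr : 0 ≤ r) (ψ : ℝ) :
    ‖(r : ℂ) * exp ((ψ : ℂ) * I)‖ = r := by
  rw [norm_mul, norm_exp_ofReal_mul_I, mul_one, norm_real, Real.norm_of_nonneg hr]

lemma re_ofReal_mul_ofReal_mul (s r : ℝ) (ω : ℂ) : ((s : ℂ) * (r : ℂ) * ω).re = s * r * ω.re := by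
  rw [← ofReal_mul, re_ofReal_mul]

lemma norm_apply_ofReal_mul_exp_mul_I_le {F : Type*} [Norm F] {G : ℂ → F} {θ M p : ℝ}
    (hθ : θ < Real.pi)
    (hG : ∀ z : ℂ, z ≠ 0 → |z.arg| ≤ θ → ‖G z‖ ≤ M * ‖z‖ ^ p)
    {ψ r : ℝ} (hψ : |ψ| ≤ θ) (hr : 0 < r) :
    ‖G ((r : ℂ) * exp ((ψ : ℂ) * I))‖ ≤ M * r ^ p := by
  have hnorm := norm_ofReal_mul_exp_mul_I hr.le ψ
  have hne : (r : ℂ) * exp ((ψ : ℂ) * I) ≠ 0 := norm_ne_zero_iff.mp (by rw [hnorm]; exact hr.ne')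
  obtain ⟨hψl, hψu⟩ := abs_le.mp hψ
  have harg : arg ((r : ℂ) * exp ((ψ : ℂ) * I)) = ψ := by
    rw [exp_mul_I]
    exact arg_mul_cos_add_sin_mul_I hr ⟨by linarith, by linarith⟩
  simpa only [hnorm] using hG _ hne (by rw [harg]; exact hψ)

variable {F : Type*} [NormedAddCommGroup F] [NormedSpace ℂ F]

noncomputable def rayIntegral (G : ℂ → F) (ω : ℂ) (κ s : ℝ) : F :=
  ∫ r in Ioi κ, (exp ((s : ℂ) * (r : ℂ) * ω) * ω) • G ((r : ℂ) * ω)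

noncomputable def arcIntegral (G : ℂ → F) (θ κ s : ℝ) : F :=
  ∫ φ in (-θ)..θ,
    (I * exp ((s : ℂ) * (κ : ℂ) * exp ((φ : ℂ) * I)) * (κ : ℂ) * exp ((φ : ℂ) * I)) •
      G ((κ : ℂ) * exp ((φ : ℂ) * I))

noncomputable def contourKernel (G : ℂ → F) (θ κ s : ℝ) : F :=
  ((2 * Real.pi)⁻¹ : ℝ) •
    (rayIntegral G (exp ((θ : ℂ) * I)) κ s - rayIntegral G (exp (-(θ : ℂ) * I)) κ s +
      arcIntegral G θ κ s)

lemma norm_rayIntegral_le {G : ℂ → F} {ω : ℂ} {κ s M p : ℝ} (hκ : 0 < κ) (hp : p < -1)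
    (hs : 0 ≤ s) (hω : ‖ω‖ = 1) (hre : ω.re ≤ 0) (hG : ∀ r > κ, ‖G ((r : ℂ) * ω)‖ ≤ M * r ^ p) :
    ‖rayIntegral G ω κ s‖ ≤ M * κ ^ (p + 1) / (-p - 1) := by
  have hint : ∫ r in Ioi κ, M * r ^ p = M * κ ^ (p + 1) / (-p - 1) := by
    rw [integral_const_mul, integral_Ioi_rpow_of_lt hp hκ]
    field_simp [show -p - 1 ≠ 0 by linarith, show p + 1 ≠ 0 by linarith]
    ring
  rw [← hint]
  refine norm_integral_le_of_norm_le ((integrableOn_Ioi_rpow_of_lt hp hκ).const_mul M) ?_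
  filter_upwards [ae_restrict_mem measurableSet_Ioi] with r hr
  have hdecay : ‖exp ((s : ℂ) * (r : ℂ) * ω)‖ ≤ 1 := by
    rw [norm_exp, re_ofReal_mul_ofReal_mul, Real.exp_le_one_iff]
    exact mul_nonpos_of_nonneg_of_nonpos (mul_nonneg hs (hκ.trans hr).le) hre
  calc ‖(exp ((s : ℂ) * (r : ℂ) * ω) * ω) • G ((r : ℂ) * ω)‖
      = ‖exp ((s : ℂ) * (r : ℂ) * ω)‖ * ‖G ((r : ℂ) * ω)‖ := by
        rw [norm_smul, norm_mul, hω, mul_one]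
    _ ≤ 1 * (M * r ^ p) := mul_le_mul hdecay (hG r hr) (norm_nonneg _) zero_le_one
    _ = M * r ^ p := one_mul _

lemma norm_arcIntegral_le {G : ℂ → F} {θ κ s C : ℝ} (hθ : 0 ≤ θ) (hκ : 0 < κ) (hs : 0 ≤ s)
    (hsκ : s * κ ≤ 1) (hG : ∀ φ, |φ| ≤ θ → ‖G ((κ : ℂ) * exp ((φ : ℂ) * I))‖ ≤ C) :
    ‖arcIntegral G θ κ s‖ ≤ 2 * θ * Real.exp 1 * κ * C := by
  refine (intervalIntegral.norm_integral_le_of_norm_le_const (C := Real.exp 1 * κ * C)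
    fun φ hφ => ?_).trans_eq
    (by rw [show θ - -θ = 2 * θ by ring, abs_of_nonneg (by linarith)]; ring)
  rw [uIoc_of_le (by linarith)] at hφ
  have hgrowth : Real.exp (s * κ * Real.cos φ) ≤ Real.exp 1 := by
    gcongr
    nlinarith [Real.cos_le_one φ, mul_nonneg hs hκ.le]
  calc ‖(I * exp ((s : ℂ) * (κ : ℂ) * exp ((φ : ℂ) * I)) * (κ : ℂ) * exp ((φ : ℂ) * I)) •
        G ((κ : ℂ) * exp ((φ : ℂ) * I))‖
      = Real.exp (s * κ * Real.cos φ) * κ * ‖G ((κ : ℂ) * exp ((φ : ℂ) * I))‖ := by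
        rw [norm_smul, norm_mul, norm_mul, norm_mul, norm_I, norm_exp, norm_exp_ofReal_mul_I,
          norm_real, Real.norm_of_nonneg hκ.le, re_ofReal_mul_ofReal_mul, exp_ofReal_mul_I_re,
          one_mul, mul_one]
    _ ≤ Real.exp 1 * κ * C := by
        gcongr
        exact hG φ (abs_le.mpr ⟨hφ.1.le, hφ.2⟩)

noncomputable def contourConstant (θ p : ℝ) : ℝ :=
  (2 * Real.pi)⁻¹ * (2 / (-p - 1) + 2 * θ * Real.exp 1)

lemma contourConstant_pos {θ p : ℝ} (hθ : 0 < θ) (hp : p < -1) : 0 < contourConstant θ p := by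
  have : 0 < -p - 1 := by linarith
  unfold contourConstant
  positivity

lemma norm_contourKernel_le {G : ℂ → F} {θ κ s M p : ℝ}
    (hθ : θ ∈ Ioo (Real.pi / 2) Real.pi) (hκ : 0 < κ) (hp : p < -1)
    (hG : ∀ z : ℂ, z ≠ 0 → |z.arg| ≤ θ → ‖G z‖ ≤ M * ‖z‖ ^ p) (hs : 0 ≤ s) (hsκ : s * κ ≤ 1) :
    ‖contourKernel G θ κ s‖ ≤ contourConstant θ p * M * κ ^ (p + 1) := by
  obtain ⟨hθl, hθu⟩ := hθ
  have hθ0 : 0 < θ := by linarith [Real.pi_pos]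
  have hcos : Real.cos θ ≤ 0 := Real.cos_nonpos_of_pi_div_two_le_of_le hθl.le (by linarith)
  have hG' {ψ : ℝ} (hψ : |ψ| ≤ θ) {r : ℝ} (hr : 0 < r) :=
    norm_apply_ofReal_mul_exp_mul_I_le hθu hG hψ hr
  have hray {ψ : ℝ} (hψ : |ψ| = θ) :
      ‖rayIntegral G (exp ((ψ : ℂ) * I)) κ s‖ ≤ M * κ ^ (p + 1) / (-p - 1) := by
    refine norm_rayIntegral_le hκ hp hs (norm_exp_ofReal_mul_I ψ) ?_
      fun r hr => hG' hψ.le (hκ.trans hr)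
    rw [exp_ofReal_mul_I_re, ← Real.cos_abs, hψ]
    exact hcos
  have harc := norm_arcIntegral_le hθ0.le hκ hs hsκ fun φ hφ => hG' hφ hκ
  have hκp : κ * κ ^ p = κ ^ (p + 1) := by rw [Real.rpow_add_one hκ.ne', mul_comm]
  rw [contourKernel, norm_smul, Real.norm_of_nonneg (by positivity), ← ofReal_neg]
  calc (2 * Real.pi)⁻¹ * ‖rayIntegral G (exp ((θ : ℂ) * I)) κ s -
        rayIntegral G (exp (((-θ : ℝ) : ℂ) * I)) κ s + arcIntegral G θ κ s‖
      ≤ (2 * Real.pi)⁻¹ * (M * κ ^ (p + 1) / (-p - 1) + M * κ ^ (p + 1) / (-p - 1) +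
          2 * θ * Real.exp 1 * κ * (M * κ ^ p)) := by
        gcongr
        exact (norm_add_le _ _).trans (add_le_add ((norm_sub_le _ _).trans
          (add_le_add (hray (abs_of_pos hθ0)) (hray (by rw [abs_neg, abs_of_pos hθ0])))) harc)
    _ = contourConstant θ p * M * κ ^ (p + 1) := by
        rw [contourConstant, ← hκp]
        ring

end SectorContour

lemma setIntegral_sq_norm_le {X E : Type*} [MeasurableSpace X] [NormedAddCommGroup E]
    {μ : Measure X} {s : Set X} {f : X → E} {B : ℝ} (hs : μ s < ⊤) (hf : ∀ x ∈ s, ‖f x‖ ≤ B) :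
    ∫ x in s, ‖f x‖ ^ 2 ∂μ ≤ B ^ 2 * μ.real s :=
  (Real.le_norm_self _).trans <| norm_setIntegral_le_of_norm_le_const hs fun x hx => by
    rw [Real.norm_of_nonneg (by positivity)]
    exact pow_le_pow_left₀ (norm_nonneg _) (hf x hx) 2

lemma rpow_sq_mul_le_of_mul_le_one {κ t : ℝ} (hκ : 0 < κ) (hκt : κ * t ≤ 1)
    (q : ℝ) : (κ ^ q) ^ 2 * t ≤ κ ^ (2 * q - 1) := by
  have hsplit : (κ ^ q) ^ 2 = κ ^ (2 * q - 1) * κ := by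
    rw [← Real.rpow_add_one hκ.ne', sub_add_cancel, mul_comm, Real.rpow_mul hκ.le,
      Real.rpow_two]
  rw [hsplit, mul_assoc]
  exact mul_le_of_le_one_right (by positivity) hκt

open SectorContour in
theorem solution_kernel_square_integral_estimate_general
    {H : Type*} [NormedAddCommGroup H] [InnerProductSpace ℂ H]
    (θ α γ κ M : ℝ) (hθ : θ ∈ Ioo (Real.pi / 2) Real.pi)
    (hα : α ∈ Ioo (1 : ℝ) 2) (hγ : γ ∈ Ioo (0 : ℝ) 1) (hκ : 0 < κ)
    (G : ℂ → H →L[ℂ] H)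
    (hGbound : ∀ z : ℂ, z ≠ 0 → |z.arg| ≤ θ →
      ‖G z‖ ≤ M * ‖z‖ ^ (-α - γ))
    (E : ℝ → H →L[ℂ] H)
    (hE : ∀ s : ℝ, 0 < s → E s =
      ((2 * Real.pi)⁻¹ : ℝ) •
        ((∫ r in Ioi κ,
            (Complex.exp ((s : ℂ) * (r : ℂ) * Complex.exp ((θ : ℂ) * Complex.I)) *
              Complex.exp ((θ : ℂ) * Complex.I)) •
              G ((r : ℂ) * Complex.exp ((θ : ℂ) * Complex.I))) -
          (∫ r in Ioi κ,
            (Complex.exp ((s : ℂ) * (r : ℂ) * Complex.exp (-(θ : ℂ) * Complex.I)) *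
              Complex.exp (-(θ : ℂ) * Complex.I)) •
              G ((r : ℂ) * Complex.exp (-(θ : ℂ) * Complex.I))) +
          ∫ φ in (-θ)..θ,
            (Complex.I *
              Complex.exp ((s : ℂ) * (κ : ℂ) * Complex.exp ((φ : ℂ) * Complex.I)) *
              (κ : ℂ) * Complex.exp ((φ : ℂ) * Complex.I)) •
              G ((κ : ℂ) * Complex.exp ((φ : ℂ) * Complex.I)))) :
    ∃ c > (0 : ℝ), ∀ t : ℝ, 0 < t → κ * t ≤ 1 →
      (∫ s in Ioc (0 : ℝ) t, ‖E s‖ ^ 2) ≤ c * M ^ 2 * κ ^ (1 - 2 * α - 2 * γ) := by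
  have hp : -α - γ < -1 := by linarith [hα.1, hγ.1]
  set K := contourConstant θ (-α - γ)
  have hK : 0 < K := contourConstant_pos (by linarith [hθ.1, Real.pi_pos]) hp
  refine ⟨K ^ 2, by positivity, fun t ht hκt => ?_⟩
  have hE_le (s : ℝ) (hs : s ∈ Ioc 0 t) : ‖E s‖ ≤ K * M * κ ^ (-α - γ + 1) := by
    have hsκ : s * κ ≤ 1 := by nlinarith [hs.2]
    exact hE s hs.1 ▸ norm_contourKernel_le hθ hκ hp hGbound hs.1.le hsκ
  calc ∫ s in Ioc 0 t, ‖E s‖ ^ 2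
      ≤ (K * M * κ ^ (-α - γ + 1)) ^ 2 * volume.real (Ioc 0 t) :=
        setIntegral_sq_norm_le measure_Ioc_lt_top hE_le
    _ = K ^ 2 * M ^ 2 * ((κ ^ (-α - γ + 1)) ^ 2 * t) := by
        rw [Real.volume_real_Ioc_of_le ht.le, sub_zero]
        ring
    _ ≤ K ^ 2 * M ^ 2 * κ ^ (2 * (-α - γ + 1) - 1) := by
        gcongr
        exact rpow_sq_mul_le_of_mul_le_one hκ hκt _
    _ = K ^ 2 * M ^ 2 * κ ^ (1 - 2 * α - 2 * γ) := by ring_nf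

theorem solution_kernel_square_integral_estimate
    {H : Type*} [NormedAddCommGroup H] [InnerProductSpace ℂ H] [CompleteSpace H]
    (θ α γ κ M : ℝ) (hθ : θ ∈ Ioo (Real.pi / 2) Real.pi)
    (hα : α ∈ Ioo (1 : ℝ) 2) (hγ : γ ∈ Ioo (0 : ℝ) 1) (hκ : 0 < κ) (hM : 0 < M)
    (G : ℂ → H →L[ℂ] H) (hGcont : ContinuousOn G {(0 : ℂ)}ᶜ)
    (hGbound : ∀ z : ℂ, z ≠ 0 → |z.arg| ≤ θ →
      ‖G z‖ ≤ M * ‖z‖ ^ (-α - γ))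
    (E : ℝ → H →L[ℂ] H)
    (hE : ∀ s : ℝ, 0 < s → E s =
      ((2 * Real.pi)⁻¹ : ℝ) •
        ((∫ r in Ioi κ,
            (Complex.exp ((s : ℂ) * (r : ℂ) * Complex.exp ((θ : ℂ) * Complex.I)) *
              Complex.exp ((θ : ℂ) * Complex.I)) •
              G ((r : ℂ) * Complex.exp ((θ : ℂ) * Complex.I))) -
          (∫ r in Ioi κ,
            (Complex.exp ((s : ℂ) * (r : ℂ) * Complex.exp (-(θ : ℂ) * Complex.I)) *
              Complex.exp (-(θ : ℂ) * Complex.I)) •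
              G ((r : ℂ) * Complex.exp (-(θ : ℂ) * Complex.I))) +
          ∫ φ in (-θ)..θ,
            (Complex.I *
              Complex.exp ((s : ℂ) * (κ : ℂ) * Complex.exp ((φ : ℂ) * Complex.I)) *
              (κ : ℂ) * Complex.exp ((φ : ℂ) * Complex.I)) •
              G ((κ : ℂ) * Complex.exp ((φ : ℂ) * Complex.I)))) :
    ∃ c > (0 : ℝ), ∀ t : ℝ, 0 < t → κ * t ≤ 1 →
      (∫ s in Ioc (0 : ℝ) t, ‖E s‖ ^ 2) ≤ c * M ^ 2 * κ ^ (1 - 2 * α - 2 * γ) :=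
  solution_kernel_square_integral_estimate_general θ α γ κ M hθ hα hγ hκ G hGbound E hE
end

section
/- Let θ ∈ (π/2, π), α ∈ (1, 2) and γ ∈ (0, 1). There exists a constant c > 0, depending only on θ, α, γ, such that for all τ and t with 0 < τ ≤ t one has ∫_{π/(τ sin θ)}^∞ e^{r t cos θ} r^{−(α+γ)} dr ≤ c τ² t^{α+γ−3}. -/
open Set MeasureTheory

theorem truncated_ray_integral_second_order_estimate
    (θ α γ : ℝ) (hθ : θ ∈ Ioo (Real.pi / 2) Real.pi)
    (hα : α ∈ Ioo (1 : ℝ) 2) (hγ : γ ∈ Ioo (0 : ℝ) 1) :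
    ∃ c > (0 : ℝ), ∀ τ t : ℝ, 0 < τ → τ ≤ t →
      (∫ r in Ioi (Real.pi / (τ * Real.sin θ)),
          Real.exp (r * t * Real.cos θ) * r ^ (-(α + γ))) ≤
      c * τ ^ 2 * t ^ (α + γ - 3) := by
  obtain ⟨hθ1, hθ2⟩ := hθ
  obtain ⟨hα1, hα2⟩ := hα
  obtain ⟨hγ1, hγ2⟩ := hγ
  have hπ := Real.pi_pos
  have hs : 0 < Real.sin θ :=
    Real.sin_pos_of_pos_of_lt_pi (by linarith) hθ2
  have hcos : Real.cos θ < 0 := Real.cos_neg_of_pi_div_two_lt_of_lt hθ1 (by linarith)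
  set m : ℝ := -Real.cos θ with hm_def
  have hm : 0 < m := by simp only [hm_def]; linarith
  set A : ℝ := α + γ with hA_def
  have hA1 : 1 < A := by simp only [hA_def]; linarith
  have hA3 : A < 3 := by simp only [hA_def]; linarith
  have hB : (0 : ℝ) < (Real.sin θ / Real.pi) ^ (A + 1) := by positivity
  refine ⟨4 / m ^ 2 * (Real.sin θ / Real.pi) ^ (A + 1) / (A + 1), by positivity, ?_⟩
  intro τ t hτ hτt
  have ht : 0 < t := lt_of_lt_of_le hτ hτt
  set R : ℝ := Real.pi / (τ * Real.sin θ) with hR_def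
  have hR0 : 0 < R := by positivity
  have key : ∀ r ∈ Ioi R, Real.exp (r * t * Real.cos θ) * r ^ (-A)
      ≤ (4 / (m ^ 2 * t ^ 2)) * r ^ (-(A + 2)) := by
    intro r hr
    have hr0 : 0 < r := lt_trans hR0 hr
    set x : ℝ := m * (r * t) with hx_def
    have hx : 0 < x := by positivity
    have hexp : Real.exp (r * t * Real.cos θ) ≤ 4 / x ^ 2 := by
      have h1 : x / 2 ≤ Real.exp (x / 2) := by
        have := Real.add_one_le_exp (x / 2); linarith
      have h2 : (x / 2) ^ 2 ≤ Real.exp (x / 2) ^ 2 :=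
        pow_le_pow_left₀ (by positivity) h1 2
      have h3 : Real.exp (x / 2) ^ 2 = Real.exp x := by
        rw [sq, ← Real.exp_add]; ring_nf
      have h4 : x ^ 2 / 4 ≤ Real.exp x := by rw [← h3]; nlinarith [h2]
      have h5 : r * t * Real.cos θ = -x := by simp only [hx_def, hm_def]; ring
      rw [h5, Real.exp_neg]
      have h6 : (Real.exp x)⁻¹ ≤ (x ^ 2 / 4)⁻¹ := by
        apply inv_anti₀ (by positivity) h4
      calc (Real.exp x)⁻¹ ≤ (x ^ 2 / 4)⁻¹ := h6
        _ = 4 / x ^ 2 := by rw [inv_div]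
    have h5 : r ^ (-(A + 2)) = r ^ (-A) * (r ^ 2)⁻¹ := by
      rw [show -(A + 2) = -A + (-2) by ring, Real.rpow_add hr0,
        show (-2 : ℝ) = ((-2 : ℤ) : ℝ) by norm_num, Real.rpow_intCast]
      norm_num [zpow_neg, inv_pow]
    have hrpow : (0 : ℝ) < r ^ (-A) := Real.rpow_pos_of_pos hr0 _
    calc Real.exp (r * t * Real.cos θ) * r ^ (-A)
        ≤ (4 / x ^ 2) * r ^ (-A) := by
          exact mul_le_mul_of_nonneg_right hexp hrpow.le
      _ = (4 / (m ^ 2 * t ^ 2)) * r ^ (-(A + 2)) := by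
          rw [h5, hx_def]; field_simp <;> first | ring | exact Or.inl rfl
  have hint : IntegrableOn (fun r : ℝ => (4 / (m ^ 2 * t ^ 2)) * r ^ (-(A + 2))) (Ioi R) :=
    (integrableOn_Ioi_rpow_of_lt (by linarith) hR0).const_mul _
  have hmono : (∫ r in Ioi R, Real.exp (r * t * Real.cos θ) * r ^ (-A))
      ≤ ∫ r in Ioi R, (4 / (m ^ 2 * t ^ 2)) * r ^ (-(A + 2)) := by
    apply integral_mono_of_nonneg
    · filter_upwards [ae_restrict_mem measurableSet_Ioi] with r hr
      have hr0 : 0 < r := lt_trans hR0 hr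
      positivity
    · exact hint
    · filter_upwards [ae_restrict_mem measurableSet_Ioi] with r hr
      exact key r hr
  have hval : (∫ r in Ioi R, (4 / (m ^ 2 * t ^ 2)) * r ^ (-(A + 2)))
      = (4 / (m ^ 2 * t ^ 2)) * (R ^ (-(A + 1)) / (A + 1)) := by
    rw [integral_const_mul, integral_Ioi_rpow_of_lt (by linarith) hR0]
    rw [show -(A + 2) + 1 = -(A + 1) by ring]
    rw [show -R ^ (-(A + 1)) / (-(A + 1)) = R ^ (-(A + 1)) / (A + 1) by
      rw [neg_div_neg_eq]]
  -- Compute R ^ (-(A+1))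
  have hRinv : R⁻¹ = τ * Real.sin θ / Real.pi := by
    rw [hR_def, inv_div]
  have hRpow : R ^ (-(A + 1)) = τ ^ (A + 1) * (Real.sin θ / Real.pi) ^ (A + 1) := by
    rw [Real.rpow_neg hR0.le, ← Real.inv_rpow hR0.le, hRinv,
      show τ * Real.sin θ / Real.pi = τ * (Real.sin θ / Real.pi) by ring,
      Real.mul_rpow hτ.le (by positivity)]
  have hτpow : τ ^ (A + 1) = τ ^ 2 * τ ^ (A - 1) := by
    rw [show A + 1 = 2 + (A - 1) by ring, Real.rpow_add hτ,
      show (2 : ℝ) = ((2 : ℕ) : ℝ) by norm_num, Real.rpow_natCast]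
  have htpow : t ^ (A - 3) = t ^ (A - 1) * (t ^ 2)⁻¹ := by
    rw [show A - 3 = (A - 1) + (-2) by ring, Real.rpow_add ht,
      show (-2 : ℝ) = ((-2 : ℤ) : ℝ) by norm_num, Real.rpow_intCast]
    norm_num [zpow_neg, inv_pow]
  have hle : τ ^ (A - 1) ≤ t ^ (A - 1) :=
    Real.rpow_le_rpow hτ.le hτt (by linarith)
  have hτp : (0 : ℝ) < τ ^ (A - 1) := Real.rpow_pos_of_pos hτ _
  calc (∫ r in Ioi R, Real.exp (r * t * Real.cos θ) * r ^ (-A))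
      ≤ (4 / (m ^ 2 * t ^ 2)) * (R ^ (-(A + 1)) / (A + 1)) := hval ▸ hmono
    _ = (4 * (Real.sin θ / Real.pi) ^ (A + 1) * τ ^ 2 / (m ^ 2 * t ^ 2 * (A + 1)))
          * τ ^ (A - 1) := by
        rw [hRpow, hτpow]; field_simp
    _ ≤ (4 * (Real.sin θ / Real.pi) ^ (A + 1) * τ ^ 2 / (m ^ 2 * t ^ 2 * (A + 1)))
          * t ^ (A - 1) := by
        apply mul_le_mul_of_nonneg_left hle (by positivity)
    _ = 4 / m ^ 2 * (Real.sin θ / Real.pi) ^ (A + 1) / (A + 1) * τ ^ 2 * t ^ (A - 3) := by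
        rw [htpow]; field_simp <;> first | ring | exact Or.inl rfl
end

section
/- Let θ ∈ (π/2, π), α ∈ (1, 2) and γ ∈ (0, 1). There exists a constant c > 0, depending only on θ, α, γ, such that for all τ and t with 0 < τ ≤ t one has ∫_{π/(τ sin θ)}^∞ e^{r t cos θ} r^{−(α+γ)} dr ≤ c τ³ t^{α+γ−4}. -/
open Set MeasureTheory

theorem truncated_ray_integral_third_order_estimate
    (θ α γ : ℝ) (hθ : θ ∈ Ioo (Real.pi / 2) Real.pi)
    (hα : α ∈ Ioo (1 : ℝ) 2) (hγ : γ ∈ Ioo (0 : ℝ) 1) :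
    ∃ c > (0 : ℝ), ∀ τ t : ℝ, 0 < τ → τ ≤ t →
      (∫ r in Ioi (Real.pi / (τ * Real.sin θ)),
          Real.exp (r * t * Real.cos θ) * r ^ (-(α + γ))) ≤
      c * τ ^ 3 * t ^ (α + γ - 4) := by
  obtain ⟨hθ1, hθ2⟩ := hθ
  have hπ : (0:ℝ) < Real.pi := Real.pi_pos
  have hs : 0 < Real.sin θ := Real.sin_pos_of_pos_of_lt_pi (by linarith) hθ2
  have hcos : Real.cos θ < 0 := Real.cos_neg_of_pi_div_two_lt_of_lt hθ1 (by linarith)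
  set s := Real.sin θ with hsdef
  set m := -Real.cos θ with hmdef
  have hm : 0 < m := by simp only [hmdef]; linarith
  have hag : 0 < α + γ := by have := hα.1; have := hγ.1; linarith
  refine ⟨(s / Real.pi) ^ (α + γ) * (27 * s ^ 3 / (Real.pi ^ 3 * m ^ 4)),
    by positivity, ?_⟩
  intro τ t hτ hτt
  have ht : 0 < t := lt_of_lt_of_le hτ hτt
  set R := Real.pi / (τ * s) with hRdef
  have hR : 0 < R := by positivity
  have hb : 0 < t * m := by positivity
  -- Step 1 : bound the integral by a pure exponential integral
  have key : (∫ r in Ioi R, Real.exp (r * t * Real.cos θ) * r ^ (-(α + γ)))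
      ≤ R ^ (-(α + γ)) * (Real.exp (-(t * m * R)) / (t * m)) := by
    have hInt : IntegrableOn (fun r => R ^ (-(α + γ)) * Real.exp (-(t * m) * r)) (Ioi R) :=
      (exp_neg_integrableOn_Ioi R hb).const_mul _
    have hmono : (∫ r in Ioi R, Real.exp (r * t * Real.cos θ) * r ^ (-(α + γ)))
        ≤ ∫ r in Ioi R, R ^ (-(α + γ)) * Real.exp (-(t * m) * r) := by
      apply integral_mono_of_nonneg
      · filter_upwards [ae_restrict_mem measurableSet_Ioi] with r hr
        have hr0 : (0:ℝ) < r := lt_trans hR hr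
        positivity
      · exact hInt
      · filter_upwards [ae_restrict_mem measurableSet_Ioi] with r hr
        have hr0 : (0:ℝ) < r := lt_trans hR hr
        have h1 : Real.exp (r * t * Real.cos θ) = Real.exp (-(t * m) * r) := by
          congr 1; rw [hmdef]; ring
        have h2 : r ^ (-(α + γ)) ≤ R ^ (-(α + γ)) :=
          Real.rpow_le_rpow_of_nonpos hR (le_of_lt hr) (by linarith)
        calc Real.exp (r * t * Real.cos θ) * r ^ (-(α + γ))
            = r ^ (-(α + γ)) * Real.exp (-(t * m) * r) := by rw [h1, mul_comm]
          _ ≤ R ^ (-(α + γ)) * Real.exp (-(t * m) * r) :=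
            mul_le_mul_of_nonneg_right h2 (Real.exp_nonneg _)
    have hcalc : (∫ r in Ioi R, Real.exp (-(t * m) * r)) = Real.exp (-(t * m * R)) / (t * m) := by
      have h := integral_comp_mul_left_Ioi (fun x => Real.exp (-x)) R hb
      simp only [smul_eq_mul, integral_exp_neg_Ioi] at h
      calc (∫ r in Ioi R, Real.exp (-(t * m) * r))
          = ∫ r in Ioi R, Real.exp (-(t * m * r)) := by
            congr 1; ext r; congr 1; ring
        _ = (t * m)⁻¹ * Real.exp (-(t * m * R)) := h
        _ = Real.exp (-(t * m * R)) / (t * m) := by rw [div_eq_inv_mul]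
    calc (∫ r in Ioi R, Real.exp (r * t * Real.cos θ) * r ^ (-(α + γ)))
        ≤ ∫ r in Ioi R, R ^ (-(α + γ)) * Real.exp (-(t * m) * r) := hmono
      _ = R ^ (-(α + γ)) * ∫ r in Ioi R, Real.exp (-(t * m) * r) := integral_const_mul _ _
      _ = R ^ (-(α + γ)) * (Real.exp (-(t * m * R)) / (t * m)) := by rw [hcalc]
  -- Step 2 : exponential decay  e^{-x} ≤ 27 / x³
  have hXpos : 0 < t * m * R := by positivity
  have hexp : Real.exp (-(t * m * R)) ≤ 27 / (t * m * R) ^ 3 := by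
    set x := t * m * R with hx
    have h1 : x / 3 ≤ Real.exp (x / 3) :=
      le_trans (by linarith) (Real.add_one_le_exp (x / 3))
    have h2 : (x / 3) ^ 3 ≤ Real.exp (x / 3) ^ 3 :=
      pow_le_pow_left₀ (by positivity) h1 3
    have h3 : Real.exp (x / 3) ^ 3 = Real.exp x := by
      rw [← Real.exp_nat_mul]; congr 1; push_cast; ring
    have h4 : x ^ 3 / 27 ≤ Real.exp x := by
      rw [← h3]; calc x ^ 3 / 27 = (x / 3) ^ 3 := by ring
        _ ≤ _ := h2
    rw [Real.exp_neg]
    rw [inv_le_iff_one_le_mul₀ (Real.exp_pos x)] at *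
    rw [div_mul_eq_mul_div, le_div_iff₀ (by positivity)]
    nlinarith [Real.exp_pos x, pow_pos hXpos 3]
  -- Step 3 : algebra
  have hRval : R ^ (-(α + γ)) = (τ * s / Real.pi) ^ (α + γ) := by
    rw [Real.rpow_neg hR.le, ← Real.inv_rpow hR.le, hRdef, inv_div]
  have hsplit : (τ * s / Real.pi) ^ (α + γ) = τ ^ (α + γ) * (s / Real.pi) ^ (α + γ) := by
    rw [show τ * s / Real.pi = τ * (s / Real.pi) by ring,
      Real.mul_rpow hτ.le (by positivity)]
  have hτt' : τ ^ (α + γ) ≤ t ^ (α + γ) := Real.rpow_le_rpow hτ.le hτt hag.le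
  have hXval : (t * m * R) ^ 3 = Real.pi ^ 3 * m ^ 3 * t ^ 3 / (s ^ 3 * τ ^ 3) := by
    rw [hRdef]; field_simp
  have htpow : t ^ (α + γ - 4) = t ^ (α + γ) / t ^ (4:ℕ) := by
    rw [← Real.rpow_natCast t 4, ← Real.rpow_sub ht]; norm_num
  calc (∫ r in Ioi R, Real.exp (r * t * Real.cos θ) * r ^ (-(α + γ)))
      ≤ R ^ (-(α + γ)) * (Real.exp (-(t * m * R)) / (t * m)) := key
    _ ≤ (τ ^ (α + γ) * (s / Real.pi) ^ (α + γ)) * ((27 / (t * m * R) ^ 3) / (t * m)) := by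
        rw [hRval, hsplit]
        gcongr
    _ ≤ (t ^ (α + γ) * (s / Real.pi) ^ (α + γ)) * ((27 / (t * m * R) ^ 3) / (t * m)) := by
        gcongr
    _ = (s / Real.pi) ^ (α + γ) * (27 * s ^ 3 / (Real.pi ^ 3 * m ^ 4)) * τ ^ 3 *
          (t ^ (α + γ) / t ^ (4:ℕ)) := by
        rw [hXval]
        field_simp
    _ = (s / Real.pi) ^ (α + γ) * (27 * s ^ 3 / (Real.pi ^ 3 * m ^ 4)) * τ ^ 3 *
          t ^ (α + γ - 4) := by rw [htpow]
end
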